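/- For every real number κ ≠ 0 and every real number x, the complex number J(κ,x) = ∫_0^1 e^{iκx(2s−1)} · exp((i/(2κ))(log s − log(1−s))) ds equals its own complex conjugate; in particular J(κ,x) is real, i.e. Im(J(κ,x)) = 0. -/
import Mathlib


open MeasureTheory Real Complex

/-- The integral `J(κ,x) = ∫_0^1 e^{iκx(2s−1)} · exp((i/(2κ))(log s − log(1−s))) ds`. -/
noncomputable def Jint (κ x : ℝ) : ℂ :=
  ∫ s in Set.Ioo (0 : ℝ) 1,
    Complex.exp (Complex.I * κ * x * (2 * s - 1)) *
      Complex.exp ((Complex.I / (2 * κ)) * ((Real.log s : ℂ) - (Real.log (1 - s) : ℂ)))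

/-- `J(κ,x)` equals its own complex conjugate; in particular it is real. -/
theorem Jint_eq_conj_and_real (κ x : ℝ) (hκ : κ ≠ 0) :
    (starRingEnd ℂ) (Jint κ x) = Jint κ x ∧ (Jint κ x).im = 0 := by
  set F : ℝ → ℂ := fun s =>
    Complex.exp (Complex.I * κ * x * (2 * s - 1)) *
      Complex.exp ((Complex.I / (2 * κ)) * ((Real.log s : ℂ) - (Real.log (1 - s) : ℂ)))
    with hF
  have hf : ∀ s : ℝ, (starRingEnd ℂ) (F s) = F (1 - s) := by
    intro s
    simp only [hF, map_mul, ← Complex.exp_conj, map_sub, map_div₀, map_ofNat,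
      Complex.conj_I, Complex.conj_ofReal, map_one]
    congr 1
    · congr 1
      push_cast
      ring
    · congr 1
      have h1 : (1 : ℝ) - (1 - s) = s := by ring
      rw [h1]
      push_cast
      ring
  have hIoo : ∀ g : ℝ → ℂ, ∫ s in Set.Ioo (0:ℝ) 1, g s = ∫ s in (0:ℝ)..1, g s := by
    intro g
    rw [intervalIntegral.integral_of_le zero_le_one,
      MeasureTheory.integral_Ioc_eq_integral_Ioo]
  have key : (starRingEnd ℂ) (Jint κ x) = Jint κ x := by
    have : Jint κ x = ∫ s in Set.Ioo (0:ℝ) 1, F s := rfl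
    rw [this, ← integral_conj]
    calc ∫ s in Set.Ioo (0:ℝ) 1, (starRingEnd ℂ) (F s)
        = ∫ s in Set.Ioo (0:ℝ) 1, F (1 - s) := by simp_rw [hf]
      _ = ∫ s in (0:ℝ)..1, F (1 - s) := hIoo _
      _ = ∫ s in (0:ℝ)..1, F s := by
          simpa using intervalIntegral.integral_comp_sub_left F 1 (a := 0) (b := 1)
      _ = ∫ s in Set.Ioo (0:ℝ) 1, F s := (hIoo _).symm
  exact ⟨key, Complex.conj_eq_iff_im.mp key⟩
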